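/- For each ε ∈ {0,1}, the multiplicative submonoid { a_{21}^n : n ∈ ℕ } satisfies the left Ore condition both in D_q(Mat_2^ε) and in D'_q(Mat_2^ε). -/
import Mathlib


noncomputable section

open Matrix

/-- The ground field `k = ℂ(q^{1/2})`. -/
abbrev K : Type := RatFunc ℂ

/-- `q^{1/2}`, the generating variable of `K = ℂ(q^{1/2})`. -/
def qh : K := RatFunc.X

/-- The quantum parameter `q = (q^{1/2})^2`. -/
def qq : K := qh ^ 2

/-- The reflection equation (RE) relations for a 2×2 matrix of elements,
with `A i j` playing the role of `a_{(i+1)(j+1)}`. -/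
inductive ReRel {F : Type} [Ring F] [Algebra K F] (A : Matrix (Fin 2) (Fin 2) F) : F → F → Prop
  | r1 : ReRel A (A 0 1 * A 0 0 - A 0 0 * A 0 1) ((-((qq ^ 2)⁻¹ - 1)) • (A 0 1 * A 1 1))
  | r2 : ReRel A (A 1 1 * A 0 0) (A 0 0 * A 1 1)
  | r3 : ReRel A (A 1 0 * A 0 0 - A 0 0 * A 1 0) (((qq ^ 2)⁻¹ - 1) • (A 1 1 * A 1 0))
  | r4 : ReRel A (A 1 1 * A 0 1) ((qq ^ 2) • (A 0 1 * A 1 1))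
  | r5 : ReRel A (A 1 0 * A 0 1 - A 0 1 * A 1 0)
      ((-((qq ^ 2)⁻¹ - 1)) • (A 0 0 * A 1 1 - A 1 1 * A 1 1))
  | r6 : ReRel A (A 1 1 * A 1 0) (((qq ^ 2)⁻¹) • (A 1 0 * A 1 1))

/-- The FRT relations for a 2×2 matrix of elements,
with `B i j` playing the role of `f_{(i+1)(j+1)}`. -/
inductive FrtRel {F : Type} [Ring F] [Algebra K F] (B : Matrix (Fin 2) (Fin 2) F) : F → F → Prop
  | r1 : FrtRel B (B 0 0 * B 0 1) (qq • (B 0 1 * B 0 0))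
  | r2 : FrtRel B (B 0 0 * B 1 0) (qq⁻¹ • (B 1 0 * B 0 0))
  | r3 : FrtRel B (B 0 0 * B 1 1) (B 1 1 * B 0 0)
  | r4 : FrtRel B (B 0 1 * B 1 0 - B 1 0 * B 0 1) ((qq⁻¹ - qq) • (B 1 1 * B 0 0))
  | r5 : FrtRel B (B 0 1 * B 1 1) (qq⁻¹ • (B 1 1 * B 0 1))
  | r6 : FrtRel B (B 1 0 * B 1 1) (qq • (B 1 1 * B 1 0))

/-- The standard R-matrix of `GL_2` (rows `(q,0,0,0),(0,1,0,0),(0,q-q⁻¹,1,0),(0,0,0,q)`),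
with the tensor-square index set `Fin 2 × Fin 2` ordered as `(0,0),(0,1),(1,0),(1,1)`. -/
def Rmat : Matrix (Fin 2 × Fin 2) (Fin 2 × Fin 2) K := fun p q =>
  if p = q then (if p.1 = p.2 then qq else 1)
  else if p = ((1 : Fin 2), (0 : Fin 2)) ∧ q = ((0 : Fin 2), (1 : Fin 2)) then qq - qq⁻¹ else 0

/-- `R₂₁ = P R P`, the conjugate of the R-matrix by the flip `P` of the two tensor factors. -/
def Rmat21 : Matrix (Fin 2 × Fin 2) (Fin 2 × Fin 2) K := fun p q => Rmat (p.2, p.1) (q.2, q.1)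

/-- Generators of `D_q(Mat_2^ε)`: the entries of `A` and of `D`. -/
inductive DGen : Type | a (i j : Fin 2) | d (i j : Fin 2)

abbrev FD := FreeAlgebra K DGen

def DAmat : Matrix (Fin 2) (Fin 2) FD := fun i j => FreeAlgebra.ι K (DGen.a i j)
def DDmat : Matrix (Fin 2) (Fin 2) FD := fun i j => FreeAlgebra.ι K (DGen.d i j)

/-- Lift a scalar 4×4 matrix to a matrix over the free algebra. -/
def liftD (M : Matrix (Fin 2 × Fin 2) (Fin 2 × Fin 2) K) :
    Matrix (Fin 2 × Fin 2) (Fin 2 × Fin 2) FD := M.map (algebraMap K FD)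

/-- `D₁ = D ⊗ I₂`. -/
def D1 : Matrix (Fin 2 × Fin 2) (Fin 2 × Fin 2) FD :=
  kroneckerMap (· * ·) DDmat (1 : Matrix (Fin 2) (Fin 2) FD)

/-- `A₂ = I₂ ⊗ A`. -/
def A2 : Matrix (Fin 2 × Fin 2) (Fin 2 × Fin 2) FD :=
  kroneckerMap (· * ·) (1 : Matrix (Fin 2) (Fin 2) FD) DAmat

/-- The defining relations of `D_q(Mat_2^ε)`: RE relations for `A`, RE relations for `D`,
and the cross relations `R₂₁ D₁ R A₂ = q^ε A₂ R₂₁ D₁ R₂₁⁻¹`. -/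
inductive DqRel (ε : ℕ) : FD → FD → Prop
  | ra {x y : FD} : ReRel DAmat x y → DqRel ε x y
  | rd {x y : FD} : ReRel DDmat x y → DqRel ε x y
  | cross (p q : Fin 2 × Fin 2) :
      DqRel ε ((liftD Rmat21 * D1 * liftD Rmat * A2) p q)
        ((qq ^ ε) • ((A2 * liftD Rmat21 * D1 * liftD Rmat21⁻¹) p q))

/-- The algebra `D_q(Mat_2^ε)` of q-difference operators on 2×2 matrices. -/
abbrev DqM2 (ε : ℕ) := RingQuot (DqRel ε)

/-- The generator `a_{(i+1)(j+1)}` of `D_q(Mat_2^ε)`. -/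
def da (ε : ℕ) (i j : Fin 2) : DqM2 ε := RingQuot.mkAlgHom K (DqRel ε) (DAmat i j)

/-- The generator `∂_{(i+1)(j+1)}` of `D_q(Mat_2^ε)`. -/
def dd (ε : ℕ) (i j : Fin 2) : DqM2 ε := RingQuot.mkAlgHom K (DqRel ε) (DDmat i j)

/-- `det_q(A) = a₁₁a₂₂ - q² a₁₂a₂₁` in `D_q(Mat_2^ε)`. -/
def detA (ε : ℕ) : DqM2 ε := da ε 0 0 * da ε 1 1 - (qq ^ 2) • (da ε 0 1 * da ε 1 0)

/-- `det_q(D) = ∂₁₁∂₂₂ - q² ∂₁₂∂₂₁` in `D_q(Mat_2^ε)`. -/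
def detD (ε : ℕ) : DqM2 ε := dd ε 0 0 * dd ε 1 1 - (qq ^ 2) • (dd ε 0 1 * dd ε 1 0)

/-- Generators of `D'_q(Mat_2^ε)`: the entries of `A` and of `F`. -/
inductive PGen : Type | a (i j : Fin 2) | f (i j : Fin 2)

abbrev FP := FreeAlgebra K PGen

def PAmat : Matrix (Fin 2) (Fin 2) FP := fun i j => FreeAlgebra.ι K (PGen.a i j)
def PFmat : Matrix (Fin 2) (Fin 2) FP := fun i j => FreeAlgebra.ι K (PGen.f i j)

/-- Lift a scalar 4×4 matrix to a matrix over the free algebra. -/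
def liftP (M : Matrix (Fin 2 × Fin 2) (Fin 2 × Fin 2) K) :
    Matrix (Fin 2 × Fin 2) (Fin 2 × Fin 2) FP := M.map (algebraMap K FP)

/-- `A₁ = A ⊗ I₂`. -/
def PA1 : Matrix (Fin 2 × Fin 2) (Fin 2 × Fin 2) FP :=
  kroneckerMap (· * ·) PAmat (1 : Matrix (Fin 2) (Fin 2) FP)

/-- `F₂ = I₂ ⊗ F`. -/
def PF2 : Matrix (Fin 2 × Fin 2) (Fin 2 × Fin 2) FP :=
  kroneckerMap (· * ·) (1 : Matrix (Fin 2) (Fin 2) FP) PFmat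

/-- The defining relations of `D'_q(Mat_2^ε)`: RE relations for `A`, FRT relations for `F`,
and the cross relations `F₂ A₁ = q^{-ε} R₂₁ A₁ R F₂`. -/
inductive DpRel (ε : ℕ) : FP → FP → Prop
  | ra {x y : FP} : ReRel PAmat x y → DpRel ε x y
  | rf {x y : FP} : FrtRel PFmat x y → DpRel ε x y
  | cross (p q : Fin 2 × Fin 2) :
      DpRel ε ((PF2 * PA1) p q)
        ((qq⁻¹ ^ ε) • ((liftP Rmat21 * PA1 * liftP Rmat * PF2) p q))

/-- The algebra `D'_q(Mat_2^ε)`. -/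
abbrev DpM2 (ε : ℕ) := RingQuot (DpRel ε)

/-- The generator `a_{(i+1)(j+1)}` of `D'_q(Mat_2^ε)`. -/
def pa (ε : ℕ) (i j : Fin 2) : DpM2 ε := RingQuot.mkAlgHom K (DpRel ε) (PAmat i j)

/-- The generator `f_{(i+1)(j+1)}` of `D'_q(Mat_2^ε)`. -/
def pf (ε : ℕ) (i j : Fin 2) : DpM2 ε := RingQuot.mkAlgHom K (DpRel ε) (PFmat i j)

/-- `det_q(A) = a₁₁a₂₂ - q² a₁₂a₂₁` in `D'_q(Mat_2^ε)`. -/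
def detAp (ε : ℕ) : DpM2 ε := pa ε 0 0 * pa ε 1 1 - (qq ^ 2) • (pa ε 0 1 * pa ε 1 0)

/-- `det_q(F) = f₁₁f₂₂ - q f₁₂f₂₁` in `D'_q(Mat_2^ε)`. -/
def detF (ε : ℕ) : DpM2 ε := pf ε 0 0 * pf ε 1 1 - qq • (pf ε 0 1 * pf ε 1 0)

/-- A subset `S` of a ring `B` satisfies the left Ore condition if for every `s ∈ S` and
every `b ∈ B` there are `s' ∈ S` and `b' ∈ B` with `s' * b = b' * s`. -/
def LeftOreCond {B : Type} [Ring B] (S : Set B) : Prop :=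
  ∀ s ∈ S, ∀ b : B, ∃ s' ∈ S, ∃ b' : B, s' * b = b' * s


/-! ### Auxiliary machinery for the proof -/

lemma qh_ne : (qh : K) ≠ 0 := RatFunc.X_ne_zero
lemma qq_ne : (qq : K) ≠ 0 := pow_ne_zero _ qh_ne

section GenericIdents

theorem mul_algE {k F : Type} [Field k] [Ring F] [Algebra k F] (c : k) (x : F) :
    x * algebraMap k F c = c • x := by rw [← Algebra.commutes, ← Algebra.smul_def]

/-- Generic version of `Rmat` over any field. -/
def RG (k : Type) [Field k] (q : k) : Matrix (Fin 2 × Fin 2) (Fin 2 × Fin 2) k := fun p Q =>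
  if p = Q then (if p.1 = p.2 then q else 1)
  else if p = ((1 : Fin 2), (0 : Fin 2)) ∧ Q = ((0 : Fin 2), (1 : Fin 2)) then q - q⁻¹ else 0

/-- Generic version of `Rmat21`. -/
def R21G (k : Type) [Field k] (q : k) : Matrix (Fin 2 × Fin 2) (Fin 2 × Fin 2) k :=
  fun p Q => RG k q (p.2, p.1) (Q.2, Q.1)

/-- Explicit inverse of `R21G`. -/
def R21IG (k : Type) [Field k] (q : k) : Matrix (Fin 2 × Fin 2) (Fin 2 × Fin 2) k := fun p Q =>
  if p = Q then (if p.1 = p.2 then q⁻¹ else 1)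
  else if p = ((0 : Fin 2), (1 : Fin 2)) ∧ Q = ((1 : Fin 2), (0 : Fin 2)) then -(q - q⁻¹) else 0

variable {k : Type} [Field k] {F : Type} [Ring F] [Algebra k F]

theorem gR21_mul_right (q : k) (hq : q ≠ 0) : R21G k q * R21IG k q = 1 := by
  ext p Q
  fin_cases p <;> fin_cases Q <;>
    simp (config := { decide := true }) [Matrix.mul_apply, Fintype.sum_prod_type,
      Fin.sum_univ_two, RG, R21G, R21IG, Matrix.one_apply] <;>
    field_simp

theorem gR21_mul_left (q : k) (hq : q ≠ 0) : R21IG k q * R21G k q = 1 := by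
  ext p Q
  fin_cases p <;> fin_cases Q <;>
    simp (config := { decide := true }) [Matrix.mul_apply, Fintype.sum_prod_type,
      Fin.sum_univ_two, RG, R21G, R21IG, Matrix.one_apply] <;>
    field_simp

theorem gDqL1 (q : k) (hq : q ≠ 0) (A D : Matrix (Fin 2) (Fin 2) F) :
    ((R21G k q).map (algebraMap k F) * kroneckerMap (· * ·) D (1 : Matrix (Fin 2) (Fin 2) F) * (RG k q).map (algebraMap k F) * kroneckerMap (· * ·) (1 : Matrix (Fin 2) (Fin 2) F) A * (R21G k q).map (algebraMap k F)) ((1 : Fin 2), (1 : Fin 2)) ((0 : Fin 2), (0 : Fin 2))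
    = (q * q) • (D 1 0 * A 1 0) := by
  simp (config := { decide := true }) [Matrix.mul_apply, Fintype.sum_prod_type,
    Fin.sum_univ_two, RG, R21G, Matrix.map_apply, Matrix.kroneckerMap_apply, Matrix.one_apply,
    ← Algebra.smul_def, mul_algE, smul_smul, mul_smul_comm, smul_mul_assoc, add_mul, mul_add]
  all_goals match_scalars
  all_goals field_simp
  all_goals ring

theorem gDqL2 (q : k) (hq : q ≠ 0) (A D : Matrix (Fin 2) (Fin 2) F) :
    ((R21G k q).map (algebraMap k F) * kroneckerMap (· * ·) D (1 : Matrix (Fin 2) (Fin 2) F) * (RG k q).map (algebraMap k F) * kroneckerMap (· * ·) (1 : Matrix (Fin 2) (Fin 2) F) A * (R21G k q).map (algebraMap k F)) ((1 : Fin 2), (1 : Fin 2)) ((1 : Fin 2), (0 : Fin 2))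
    = (q * q) • (D 1 1 * A 1 0) + (q * q - 1) • (D 1 0 * A 1 1) := by
  simp (config := { decide := true }) [Matrix.mul_apply, Fintype.sum_prod_type,
    Fin.sum_univ_two, RG, R21G, Matrix.map_apply, Matrix.kroneckerMap_apply, Matrix.one_apply,
    ← Algebra.smul_def, mul_algE, smul_smul, mul_smul_comm, smul_mul_assoc, add_mul, mul_add]
  all_goals match_scalars
  all_goals field_simp
  all_goals ring

theorem gDqL3 (q : k) (hq : q ≠ 0) (A D : Matrix (Fin 2) (Fin 2) F) :
    ((R21G k q).map (algebraMap k F) * kroneckerMap (· * ·) D (1 : Matrix (Fin 2) (Fin 2) F) * (RG k q).map (algebraMap k F) * kroneckerMap (· * ·) (1 : Matrix (Fin 2) (Fin 2) F) A * (R21G k q).map (algebraMap k F)) ((0 : Fin 2), (1 : Fin 2)) ((0 : Fin 2), (0 : Fin 2))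
    = q • (D 0 0 * A 1 0) + ((q * q * q - q) • (D 1 0 * A 0 0) + (q⁻¹ - 2 * q + q * q * q) • (D 1 1 * A 1 0)) := by
  simp (config := { decide := true }) [Matrix.mul_apply, Fintype.sum_prod_type,
    Fin.sum_univ_two, RG, R21G, Matrix.map_apply, Matrix.kroneckerMap_apply, Matrix.one_apply,
    ← Algebra.smul_def, mul_algE, smul_smul, mul_smul_comm, smul_mul_assoc, add_mul, mul_add]
  all_goals match_scalars
  all_goals field_simp
  all_goals ring

theorem gDqL4 (q : k) (hq : q ≠ 0) (A D : Matrix (Fin 2) (Fin 2) F) :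
    ((R21G k q).map (algebraMap k F) * kroneckerMap (· * ·) D (1 : Matrix (Fin 2) (Fin 2) F) * (RG k q).map (algebraMap k F) * kroneckerMap (· * ·) (1 : Matrix (Fin 2) (Fin 2) F) A * (R21G k q).map (algebraMap k F)) ((0 : Fin 2), (1 : Fin 2)) ((1 : Fin 2), (0 : Fin 2))
    = q • (D 0 1 * A 1 0) + ((q⁻¹ - 2 * q + q * q * q) • (D 1 0 * A 0 1) + (q - q⁻¹) • (D 0 0 * A 1 1) + (3 * q⁻¹ - q⁻¹ * q⁻¹ * q⁻¹ - 3 * q + q * q * q) • (D 1 1 * A 1 1) + (q - q⁻¹) • (D 1 1 * A 0 0)) := by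
  simp (config := { decide := true }) [Matrix.mul_apply, Fintype.sum_prod_type,
    Fin.sum_univ_two, RG, R21G, Matrix.map_apply, Matrix.kroneckerMap_apply, Matrix.one_apply,
    ← Algebra.smul_def, mul_algE, smul_smul, mul_smul_comm, smul_mul_assoc, add_mul, mul_add]
  all_goals match_scalars
  all_goals field_simp
  all_goals ring

theorem gDqR1 (q : k) (hq : q ≠ 0) (A D : Matrix (Fin 2) (Fin 2) F) :
    (kroneckerMap (· * ·) (1 : Matrix (Fin 2) (Fin 2) F) A * (R21G k q).map (algebraMap k F) * kroneckerMap (· * ·) D (1 : Matrix (Fin 2) (Fin 2) F)) ((1 : Fin 2), (1 : Fin 2)) ((0 : Fin 2), (0 : Fin 2))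
    = A 1 0 * D 1 0 := by
  simp (config := { decide := true }) [Matrix.mul_apply, Fintype.sum_prod_type,
    Fin.sum_univ_two, RG, R21G, Matrix.map_apply, Matrix.kroneckerMap_apply, Matrix.one_apply,
    ← Algebra.smul_def, mul_algE, smul_smul, mul_smul_comm, smul_mul_assoc, add_mul, mul_add]
  all_goals match_scalars
  all_goals field_simp
  all_goals ring

theorem gDqR2 (q : k) (hq : q ≠ 0) (A D : Matrix (Fin 2) (Fin 2) F) :
    (kroneckerMap (· * ·) (1 : Matrix (Fin 2) (Fin 2) F) A * (R21G k q).map (algebraMap k F) * kroneckerMap (· * ·) D (1 : Matrix (Fin 2) (Fin 2) F)) ((1 : Fin 2), (1 : Fin 2)) ((1 : Fin 2), (0 : Fin 2))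
    = A 1 0 * D 1 1 := by
  simp (config := { decide := true }) [Matrix.mul_apply, Fintype.sum_prod_type,
    Fin.sum_univ_two, RG, R21G, Matrix.map_apply, Matrix.kroneckerMap_apply, Matrix.one_apply,
    ← Algebra.smul_def, mul_algE, smul_smul, mul_smul_comm, smul_mul_assoc, add_mul, mul_add]
  all_goals match_scalars
  all_goals field_simp
  all_goals ring

theorem gDqR3 (q : k) (hq : q ≠ 0) (A D : Matrix (Fin 2) (Fin 2) F) :
    (kroneckerMap (· * ·) (1 : Matrix (Fin 2) (Fin 2) F) A * (R21G k q).map (algebraMap k F) * kroneckerMap (· * ·) D (1 : Matrix (Fin 2) (Fin 2) F)) ((0 : Fin 2), (1 : Fin 2)) ((0 : Fin 2), (0 : Fin 2))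
    = q • (A 1 0 * D 0 0) + (q - q⁻¹) • (A 1 1 * D 1 0) := by
  simp (config := { decide := true }) [Matrix.mul_apply, Fintype.sum_prod_type,
    Fin.sum_univ_two, RG, R21G, Matrix.map_apply, Matrix.kroneckerMap_apply, Matrix.one_apply,
    ← Algebra.smul_def, mul_algE, smul_smul, mul_smul_comm, smul_mul_assoc, add_mul, mul_add]
  all_goals match_scalars
  all_goals field_simp
  all_goals ring

theorem gDqR4 (q : k) (hq : q ≠ 0) (A D : Matrix (Fin 2) (Fin 2) F) :
    (kroneckerMap (· * ·) (1 : Matrix (Fin 2) (Fin 2) F) A * (R21G k q).map (algebraMap k F) * kroneckerMap (· * ·) D (1 : Matrix (Fin 2) (Fin 2) F)) ((0 : Fin 2), (1 : Fin 2)) ((1 : Fin 2), (0 : Fin 2))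
    = q • (A 1 0 * D 0 1) + (q - q⁻¹) • (A 1 1 * D 1 1) := by
  simp (config := { decide := true }) [Matrix.mul_apply, Fintype.sum_prod_type,
    Fin.sum_univ_two, RG, R21G, Matrix.map_apply, Matrix.kroneckerMap_apply, Matrix.one_apply,
    ← Algebra.smul_def, mul_algE, smul_smul, mul_smul_comm, smul_mul_assoc, add_mul, mul_add]
  all_goals match_scalars
  all_goals field_simp
  all_goals ring

theorem gDpR1 (q : k) (hq : q ≠ 0) (A Fm : Matrix (Fin 2) (Fin 2) F) :
    ((R21G k q).map (algebraMap k F) * kroneckerMap (· * ·) A (1 : Matrix (Fin 2) (Fin 2) F) * (RG k q).map (algebraMap k F) * kroneckerMap (· * ·) (1 : Matrix (Fin 2) (Fin 2) F) Fm) ((1 : Fin 2), (1 : Fin 2)) ((0 : Fin 2), (0 : Fin 2))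
    = q • (A 1 0 * Fm 1 0) := by
  simp (config := { decide := true }) [Matrix.mul_apply, Fintype.sum_prod_type,
    Fin.sum_univ_two, RG, R21G, Matrix.map_apply, Matrix.kroneckerMap_apply, Matrix.one_apply,
    ← Algebra.smul_def, mul_algE, smul_smul, mul_smul_comm, smul_mul_assoc, add_mul, mul_add]
  all_goals match_scalars
  all_goals field_simp
  all_goals ring

theorem gDpR2 (q : k) (hq : q ≠ 0) (A Fm : Matrix (Fin 2) (Fin 2) F) :
    ((R21G k q).map (algebraMap k F) * kroneckerMap (· * ·) A (1 : Matrix (Fin 2) (Fin 2) F) * (RG k q).map (algebraMap k F) * kroneckerMap (· * ·) (1 : Matrix (Fin 2) (Fin 2) F) Fm) ((1 : Fin 2), (1 : Fin 2)) ((0 : Fin 2), (1 : Fin 2))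
    = q • (A 1 0 * Fm 1 1) := by
  simp (config := { decide := true }) [Matrix.mul_apply, Fintype.sum_prod_type,
    Fin.sum_univ_two, RG, R21G, Matrix.map_apply, Matrix.kroneckerMap_apply, Matrix.one_apply,
    ← Algebra.smul_def, mul_algE, smul_smul, mul_smul_comm, smul_mul_assoc, add_mul, mul_add]
  all_goals match_scalars
  all_goals field_simp
  all_goals ring

theorem gDpR3 (q : k) (hq : q ≠ 0) (A Fm : Matrix (Fin 2) (Fin 2) F) :
    ((R21G k q).map (algebraMap k F) * kroneckerMap (· * ·) A (1 : Matrix (Fin 2) (Fin 2) F) * (RG k q).map (algebraMap k F) * kroneckerMap (· * ·) (1 : Matrix (Fin 2) (Fin 2) F) Fm) ((1 : Fin 2), (0 : Fin 2)) ((0 : Fin 2), (0 : Fin 2))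
    = q • (A 1 0 * Fm 0 0) + (q - q⁻¹) • (A 1 1 * Fm 1 0) := by
  simp (config := { decide := true }) [Matrix.mul_apply, Fintype.sum_prod_type,
    Fin.sum_univ_two, RG, R21G, Matrix.map_apply, Matrix.kroneckerMap_apply, Matrix.one_apply,
    ← Algebra.smul_def, mul_algE, smul_smul, mul_smul_comm, smul_mul_assoc, add_mul, mul_add]
  all_goals match_scalars
  all_goals field_simp
  all_goals ring

theorem gDpR4 (q : k) (hq : q ≠ 0) (A Fm : Matrix (Fin 2) (Fin 2) F) :
    ((R21G k q).map (algebraMap k F) * kroneckerMap (· * ·) A (1 : Matrix (Fin 2) (Fin 2) F) * (RG k q).map (algebraMap k F) * kroneckerMap (· * ·) (1 : Matrix (Fin 2) (Fin 2) F) Fm) ((1 : Fin 2), (0 : Fin 2)) ((0 : Fin 2), (1 : Fin 2))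
    = q • (A 1 0 * Fm 0 1) + (q - q⁻¹) • (A 1 1 * Fm 1 1) := by
  simp (config := { decide := true }) [Matrix.mul_apply, Fintype.sum_prod_type,
    Fin.sum_univ_two, RG, R21G, Matrix.map_apply, Matrix.kroneckerMap_apply, Matrix.one_apply,
    ← Algebra.smul_def, mul_algE, smul_smul, mul_smul_comm, smul_mul_assoc, add_mul, mul_add]
  all_goals match_scalars
  all_goals field_simp
  all_goals ring

theorem gDpL1 (q : k) (hq : q ≠ 0) (A Fm : Matrix (Fin 2) (Fin 2) F) :
    (kroneckerMap (· * ·) (1 : Matrix (Fin 2) (Fin 2) F) Fm * kroneckerMap (· * ·) A (1 : Matrix (Fin 2) (Fin 2) F)) ((1 : Fin 2), (1 : Fin 2)) ((0 : Fin 2), (0 : Fin 2))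
    = Fm 1 0 * A 1 0 := by
  simp (config := { decide := true }) [Matrix.mul_apply, Fintype.sum_prod_type,
    Fin.sum_univ_two, RG, R21G, Matrix.map_apply, Matrix.kroneckerMap_apply, Matrix.one_apply,
    ← Algebra.smul_def, mul_algE, smul_smul, mul_smul_comm, smul_mul_assoc, add_mul, mul_add]
  all_goals match_scalars
  all_goals field_simp
  all_goals ring

theorem gDpL2 (q : k) (hq : q ≠ 0) (A Fm : Matrix (Fin 2) (Fin 2) F) :
    (kroneckerMap (· * ·) (1 : Matrix (Fin 2) (Fin 2) F) Fm * kroneckerMap (· * ·) A (1 : Matrix (Fin 2) (Fin 2) F)) ((1 : Fin 2), (1 : Fin 2)) ((0 : Fin 2), (1 : Fin 2))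
    = Fm 1 1 * A 1 0 := by
  simp (config := { decide := true }) [Matrix.mul_apply, Fintype.sum_prod_type,
    Fin.sum_univ_two, RG, R21G, Matrix.map_apply, Matrix.kroneckerMap_apply, Matrix.one_apply,
    ← Algebra.smul_def, mul_algE, smul_smul, mul_smul_comm, smul_mul_assoc, add_mul, mul_add]
  all_goals match_scalars
  all_goals field_simp
  all_goals ring

theorem gDpL3 (q : k) (hq : q ≠ 0) (A Fm : Matrix (Fin 2) (Fin 2) F) :
    (kroneckerMap (· * ·) (1 : Matrix (Fin 2) (Fin 2) F) Fm * kroneckerMap (· * ·) A (1 : Matrix (Fin 2) (Fin 2) F)) ((1 : Fin 2), (0 : Fin 2)) ((0 : Fin 2), (0 : Fin 2))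
    = Fm 0 0 * A 1 0 := by
  simp (config := { decide := true }) [Matrix.mul_apply, Fintype.sum_prod_type,
    Fin.sum_univ_two, RG, R21G, Matrix.map_apply, Matrix.kroneckerMap_apply, Matrix.one_apply,
    ← Algebra.smul_def, mul_algE, smul_smul, mul_smul_comm, smul_mul_assoc, add_mul, mul_add]
  all_goals match_scalars
  all_goals field_simp
  all_goals ring

theorem gDpL4 (q : k) (hq : q ≠ 0) (A Fm : Matrix (Fin 2) (Fin 2) F) :
    (kroneckerMap (· * ·) (1 : Matrix (Fin 2) (Fin 2) F) Fm * kroneckerMap (· * ·) A (1 : Matrix (Fin 2) (Fin 2) F)) ((1 : Fin 2), (0 : Fin 2)) ((0 : Fin 2), (1 : Fin 2))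
    = Fm 0 1 * A 1 0 := by
  simp (config := { decide := true }) [Matrix.mul_apply, Fintype.sum_prod_type,
    Fin.sum_univ_two, RG, R21G, Matrix.map_apply, Matrix.kroneckerMap_apply, Matrix.one_apply,
    ← Algebra.smul_def, mul_algE, smul_smul, mul_smul_comm, smul_mul_assoc, add_mul, mul_add]
  all_goals match_scalars
  all_goals field_simp
  all_goals ring


end GenericIdents

section TTsec

variable {B : Type} [Ring B] [Algebra K B]

/-- The set of elements `b` such that for every `m` some `sⁿ b` is a left multiple of `sᵐ`. -/
def TT (s : B) : Set B := { b | ∀ m : ℕ, ∃ n : ℕ, ∃ b' : B, s ^ n * b = b' * s ^ m }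

theorem TT_self (s : B) : s ∈ TT s := fun m => ⟨m, s, pow_mul_comm' s m⟩

theorem TT_algebraMap (s : B) (c : K) : algebraMap K B c ∈ TT s :=
  fun m => ⟨m, algebraMap K B c, (Algebra.commutes c (s ^ m)).symm⟩

theorem TT_zero (s : B) : (0 : B) ∈ TT s := fun m => ⟨0, 0, by simp⟩

theorem TT_smul {s b : B} (c : K) (hb : b ∈ TT s) : c • b ∈ TT s := fun m => by
  obtain ⟨n, b', h⟩ := hb m
  exact ⟨n, c • b', by rw [mul_smul_comm, h, smul_mul_assoc]⟩

theorem TT_neg {s b : B} (hb : b ∈ TT s) : -b ∈ TT s := fun m => by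
  obtain ⟨n, b', h⟩ := hb m
  exact ⟨n, -b', by rw [mul_neg, h, neg_mul]⟩

theorem TT_add {s b c : B} (hb : b ∈ TT s) (hc : c ∈ TT s) : b + c ∈ TT s := fun m => by
  obtain ⟨n1, b', hb'⟩ := hb m
  obtain ⟨n2, c', hc'⟩ := hc m
  refine ⟨max n1 n2, s ^ (max n1 n2 - n1) * b' + s ^ (max n1 n2 - n2) * c', ?_⟩
  have e1 : s ^ max n1 n2 = s ^ (max n1 n2 - n1) * s ^ n1 := by
    rw [← pow_add]; congr 1; omega
  have e2 : s ^ max n1 n2 = s ^ (max n1 n2 - n2) * s ^ n2 := by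
    rw [← pow_add]; congr 1; omega
  rw [mul_add, add_mul]
  congr 1
  · rw [e1, mul_assoc, hb', mul_assoc]
  · rw [e2, mul_assoc, hc', mul_assoc]

theorem TT_sub {s b c : B} (hb : b ∈ TT s) (hc : c ∈ TT s) : b - c ∈ TT s := by
  rw [sub_eq_add_neg]; exact TT_add hb (TT_neg hc)

theorem TT_mul {s b c : B} (hb : b ∈ TT s) (hc : c ∈ TT s) : b * c ∈ TT s := fun m => by
  obtain ⟨n1, c', hc'⟩ := hc m
  obtain ⟨n2, b', hb'⟩ := hb n1
  exact ⟨n2, b' * c', by rw [← mul_assoc, hb', mul_assoc, hc', ← mul_assoc]⟩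

theorem TT_key {s g : B} (c : K) (t : B) (ht : t ∈ TT s) (h : s * g = c • (g * s) + t) :
    g ∈ TT s := by
  have key : ∀ m N : ℕ, ∃ n, N ≤ n ∧ ∃ b', s ^ n * g = c ^ n • (g * s ^ n) + b' * s ^ m := by
    intro m
    induction m with
    | zero =>
      intro N
      refine ⟨N, le_rfl, s ^ N * g - c ^ N • (g * s ^ N), ?_⟩
      rw [pow_zero, mul_one]
      abel
    | succ m ih =>
      intro N
      obtain ⟨N₂, t', ht'⟩ := ht (m + 1)
      obtain ⟨n, hn, b', hb'⟩ := ih (max N N₂)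
      have hN₂ : N₂ ≤ n := le_trans (le_max_right _ _) hn
      refine ⟨n + 1, by omega, c • b' + s ^ (n - N₂) * t', ?_⟩
      have e1 : s ^ (n + 1) * g = s ^ n * (s * g) := by rw [pow_succ, mul_assoc]
      have e2 : s ^ n * t = s ^ (n - N₂) * t' * s ^ (m + 1) := by
        calc s ^ n * t = s ^ (n - N₂) * (s ^ N₂ * t) := by
              rw [← mul_assoc, ← pow_add]; congr 2; omega
          _ = s ^ (n - N₂) * t' * s ^ (m + 1) := by rw [ht', mul_assoc]
      calc s ^ (n + 1) * g = s ^ n * (c • (g * s) + t) := by rw [e1, h]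
        _ = c • (s ^ n * g * s) + s ^ n * t := by rw [mul_add, mul_smul_comm, mul_assoc]
        _ = c • ((c ^ n • (g * s ^ n) + b' * s ^ m) * s) + s ^ (n - N₂) * t' * s ^ (m + 1) := by
            rw [hb', e2]
        _ = c ^ (n + 1) • (g * s ^ (n + 1)) + (c • b' + s ^ (n - N₂) * t') * s ^ (m + 1) := by
            rw [add_mul, smul_mul_assoc, mul_assoc g, ← pow_succ, mul_assoc b', ← pow_succ,
              smul_add, smul_smul, ← pow_succ', add_mul, smul_mul_assoc]
            abel
  intro m
  obtain ⟨n, hn, b', hb'⟩ := key m m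
  refine ⟨n, c ^ n • (g * s ^ (n - m)) + b', ?_⟩
  have e : n - m + m = n := by omega
  rw [hb', add_mul, smul_mul_assoc, mul_assoc, ← pow_add, e]

theorem TT_keyv {s g : B} (c d : K) (hc : c ≠ 0) (u v : B) (hu : u ∈ TT s) (hv : v ∈ TT s)
    (h : d • (g * s) + u = c • (s * g) + v) : g ∈ TT s := by
  apply TT_key (c⁻¹ * d) (c⁻¹ • (u - v)) (TT_smul _ (TT_sub hu hv))
  have h2 : c • (s * g) = d • (g * s) + (u - v) := by
    calc c • (s * g) = c • (s * g) + v - v := by abel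
      _ = d • (g * s) + u - v := by rw [← h]
      _ = d • (g * s) + (u - v) := by abel
  calc s * g = c⁻¹ • (c • (s * g)) := by rw [smul_smul, inv_mul_cancel₀ hc, one_smul]
    _ = c⁻¹ • (d • (g * s) + (u - v)) := by rw [h2]
    _ = (c⁻¹ * d) • (g * s) + c⁻¹ • (u - v) := by rw [smul_add, smul_smul]

end TTsec


section DqSide

variable (ε : ℕ)

/-- Abbreviation for the quotient map of `D_q`. -/
local notation "πD" => RingQuot.mkAlgHom K (DqRel ε)

theorem Dq_cross2 (p q : Fin 2 × Fin 2) :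
    πD ((liftD Rmat21 * D1 * liftD Rmat * A2 * liftD Rmat21) p q)
      = (qq ^ ε) • πD ((A2 * liftD Rmat21 * D1) p q) := by
  have hbase : (RingQuot.mkAlgHom K (DqRel ε)).mapMatrix (liftD Rmat21 * D1 * liftD Rmat * A2)
      = (qq ^ ε) • (RingQuot.mkAlgHom K (DqRel ε)).mapMatrix
          (A2 * liftD Rmat21 * D1 * liftD Rmat21⁻¹) := by
    ext p' q'
    simp only [AlgHom.mapMatrix_apply, Matrix.map_apply, Matrix.smul_apply]
    rw [← _root_.map_smul]
    exact RingQuot.mkAlgHom_rel K (DqRel.cross p' q')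
  have hr : Rmat21 * R21IG K qq = 1 := gR21_mul_right qq qq_ne
  have hinv : Rmat21⁻¹ * Rmat21 = 1 := by
    rw [Matrix.inv_eq_right_inv hr]
    exact gR21_mul_left qq qq_ne
  have h1 : liftD Rmat21⁻¹ * liftD Rmat21
      = (1 : Matrix (Fin 2 × Fin 2) (Fin 2 × Fin 2) FD) := by
    have hmm : liftD (Rmat21⁻¹ * Rmat21) = liftD Rmat21⁻¹ * liftD Rmat21 := Matrix.map_mul
    rw [← hmm, hinv]
    exact Matrix.map_one _ (map_zero _) (map_one _)
  have h2 : (RingQuot.mkAlgHom K (DqRel ε)).mapMatrix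
        (liftD Rmat21 * D1 * liftD Rmat * A2 * liftD Rmat21)
      = (qq ^ ε) • (RingQuot.mkAlgHom K (DqRel ε)).mapMatrix (A2 * liftD Rmat21 * D1) := by
    rw [_root_.map_mul, hbase, smul_mul_assoc, ← _root_.map_mul, mul_assoc (A2 * liftD Rmat21 * D1), h1,
      mul_one]
  have h3 := congrArg (fun M : Matrix (Fin 2 × Fin 2) (Fin 2 × Fin 2) (DqM2 ε) => M p q) h2
  simpa only [AlgHom.mapMatrix_apply, Matrix.map_apply, Matrix.smul_apply] using h3

theorem fidDqL1 : (liftD Rmat21 * D1 * liftD Rmat * A2 * liftD Rmat21)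
    ((1 : Fin 2), (1 : Fin 2)) ((0 : Fin 2), (0 : Fin 2))
    = (qq * qq) • (DDmat 1 0 * DAmat 1 0) := gDqL1 qq qq_ne DAmat DDmat

theorem fidDqL2 : (liftD Rmat21 * D1 * liftD Rmat * A2 * liftD Rmat21)
    ((1 : Fin 2), (1 : Fin 2)) ((1 : Fin 2), (0 : Fin 2))
    = (qq * qq) • (DDmat 1 1 * DAmat 1 0) + (qq * qq - 1) • (DDmat 1 0 * DAmat 1 1) :=
  gDqL2 qq qq_ne DAmat DDmat

theorem fidDqL3 : (liftD Rmat21 * D1 * liftD Rmat * A2 * liftD Rmat21)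
    ((0 : Fin 2), (1 : Fin 2)) ((0 : Fin 2), (0 : Fin 2))
    = qq • (DDmat 0 0 * DAmat 1 0) + ((qq * qq * qq - qq) • (DDmat 1 0 * DAmat 0 0)
      + (qq⁻¹ - 2 * qq + qq * qq * qq) • (DDmat 1 1 * DAmat 1 0)) :=
  gDqL3 qq qq_ne DAmat DDmat

theorem fidDqL4 : (liftD Rmat21 * D1 * liftD Rmat * A2 * liftD Rmat21)
    ((0 : Fin 2), (1 : Fin 2)) ((1 : Fin 2), (0 : Fin 2))
    = qq • (DDmat 0 1 * DAmat 1 0) + ((qq⁻¹ - 2 * qq + qq * qq * qq) • (DDmat 1 0 * DAmat 0 1)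
      + (qq - qq⁻¹) • (DDmat 0 0 * DAmat 1 1)
      + (3 * qq⁻¹ - qq⁻¹ * qq⁻¹ * qq⁻¹ - 3 * qq + qq * qq * qq) • (DDmat 1 1 * DAmat 1 1)
      + (qq - qq⁻¹) • (DDmat 1 1 * DAmat 0 0)) :=
  gDqL4 qq qq_ne DAmat DDmat

theorem fidDqR1 : (A2 * liftD Rmat21 * D1)
    ((1 : Fin 2), (1 : Fin 2)) ((0 : Fin 2), (0 : Fin 2))
    = DAmat 1 0 * DDmat 1 0 := gDqR1 qq qq_ne DAmat DDmat

theorem fidDqR2 : (A2 * liftD Rmat21 * D1)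
    ((1 : Fin 2), (1 : Fin 2)) ((1 : Fin 2), (0 : Fin 2))
    = DAmat 1 0 * DDmat 1 1 := gDqR2 qq qq_ne DAmat DDmat

theorem fidDqR3 : (A2 * liftD Rmat21 * D1)
    ((0 : Fin 2), (1 : Fin 2)) ((0 : Fin 2), (0 : Fin 2))
    = qq • (DAmat 1 0 * DDmat 0 0) + (qq - qq⁻¹) • (DAmat 1 1 * DDmat 1 0) :=
  gDqR3 qq qq_ne DAmat DDmat

theorem fidDqR4 : (A2 * liftD Rmat21 * D1)
    ((0 : Fin 2), (1 : Fin 2)) ((1 : Fin 2), (0 : Fin 2))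
    = qq • (DAmat 1 0 * DDmat 0 1) + (qq - qq⁻¹) • (DAmat 1 1 * DDmat 1 1) :=
  gDqR4 qq qq_ne DAmat DDmat

theorem TTq_a11 : πD (DAmat 1 1) ∈ TT (πD (DAmat 1 0)) := by
  have E := RingQuot.mkAlgHom_rel K (DqRel.ra (ε := ε) (ReRel.r6 (A := DAmat)))
  simp only [_root_.map_mul, _root_.map_smul] at E
  exact TT_keyv ((qq ^ 2)⁻¹) 1 (inv_ne_zero (pow_ne_zero 2 qq_ne)) 0 0 (TT_zero _) (TT_zero _)
    (by rw [one_smul, add_zero, add_zero]; exact E)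

theorem TTq_a00 : πD (DAmat 0 0) ∈ TT (πD (DAmat 1 0)) := by
  have E := RingQuot.mkAlgHom_rel K (DqRel.ra (ε := ε) (ReRel.r3 (A := DAmat)))
  simp only [_root_.map_sub, _root_.map_mul, _root_.map_smul] at E
  refine TT_key 1 (((qq ^ 2)⁻¹ - 1) • (πD (DAmat 1 1) * πD (DAmat 1 0)))
    (TT_smul _ (TT_mul (TTq_a11 ε) (TT_self _))) ?_
  rw [one_smul, ← E]
  abel

theorem TTq_a01 : πD (DAmat 0 1) ∈ TT (πD (DAmat 1 0)) := by
  have E := RingQuot.mkAlgHom_rel K (DqRel.ra (ε := ε) (ReRel.r5 (A := DAmat)))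
  simp only [_root_.map_sub, _root_.map_mul, _root_.map_smul] at E
  refine TT_key 1 ((-((qq ^ 2)⁻¹ - 1)) • (πD (DAmat 0 0) * πD (DAmat 1 1)
      - πD (DAmat 1 1) * πD (DAmat 1 1)))
    (TT_smul _ (TT_sub (TT_mul (TTq_a00 ε) (TTq_a11 ε)) (TT_mul (TTq_a11 ε) (TTq_a11 ε)))) ?_
  rw [one_smul, ← E]
  abel

theorem TTq_d10 : πD (DDmat 1 0) ∈ TT (πD (DAmat 1 0)) := by
  have E := Dq_cross2 ε ((1 : Fin 2), (1 : Fin 2)) ((0 : Fin 2), (0 : Fin 2))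
  rw [fidDqL1, fidDqR1] at E
  simp only [_root_.map_smul, _root_.map_mul] at E
  exact TT_keyv (qq ^ ε) (qq * qq) (pow_ne_zero _ qq_ne) 0 0 (TT_zero _) (TT_zero _)
    (by rw [add_zero, add_zero]; exact E)

theorem TTq_d11 : πD (DDmat 1 1) ∈ TT (πD (DAmat 1 0)) := by
  have E := Dq_cross2 ε ((1 : Fin 2), (1 : Fin 2)) ((1 : Fin 2), (0 : Fin 2))
  rw [fidDqL2, fidDqR2] at E
  simp only [_root_.map_add, _root_.map_smul, _root_.map_mul] at E
  exact TT_keyv (qq ^ ε) (qq * qq) (pow_ne_zero _ qq_ne)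
    ((qq * qq - 1) • (πD (DDmat 1 0) * πD (DAmat 1 1))) 0
    (TT_smul _ (TT_mul (TTq_d10 ε) (TTq_a11 ε))) (TT_zero _)
    (by rw [add_zero]; exact E)

theorem TTq_d00 : πD (DDmat 0 0) ∈ TT (πD (DAmat 1 0)) := by
  have E := Dq_cross2 ε ((0 : Fin 2), (1 : Fin 2)) ((0 : Fin 2), (0 : Fin 2))
  rw [fidDqL3, fidDqR3] at E
  simp only [_root_.map_add, _root_.map_smul, _root_.map_mul, smul_add, smul_smul] at E
  exact TT_keyv (qq ^ ε * qq) qq (mul_ne_zero (pow_ne_zero _ qq_ne) qq_ne)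
    ((qq * qq * qq - qq) • (πD (DDmat 1 0) * πD (DAmat 0 0))
      + (qq⁻¹ - 2 * qq + qq * qq * qq) • (πD (DDmat 1 1) * πD (DAmat 1 0)))
    ((qq ^ ε * (qq - qq⁻¹)) • (πD (DAmat 1 1) * πD (DDmat 1 0)))
    (TT_add (TT_smul _ (TT_mul (TTq_d10 ε) (TTq_a00 ε)))
      (TT_smul _ (TT_mul (TTq_d11 ε) (TT_self _))))
    (TT_smul _ (TT_mul (TTq_a11 ε) (TTq_d10 ε)))
    E

theorem TTq_d01 : πD (DDmat 0 1) ∈ TT (πD (DAmat 1 0)) := by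
  have E := Dq_cross2 ε ((0 : Fin 2), (1 : Fin 2)) ((1 : Fin 2), (0 : Fin 2))
  rw [fidDqL4, fidDqR4] at E
  simp only [_root_.map_add, _root_.map_smul, _root_.map_mul, smul_add, smul_smul] at E
  exact TT_keyv (qq ^ ε * qq) qq (mul_ne_zero (pow_ne_zero _ qq_ne) qq_ne)
    ((qq⁻¹ - 2 * qq + qq * qq * qq) • (πD (DDmat 1 0) * πD (DAmat 0 1))
      + (qq - qq⁻¹) • (πD (DDmat 0 0) * πD (DAmat 1 1))
      + (3 * qq⁻¹ - qq⁻¹ * qq⁻¹ * qq⁻¹ - 3 * qq + qq * qq * qq)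
          • (πD (DDmat 1 1) * πD (DAmat 1 1))
      + (qq - qq⁻¹) • (πD (DDmat 1 1) * πD (DAmat 0 0)))
    ((qq ^ ε * (qq - qq⁻¹)) • (πD (DAmat 1 1) * πD (DDmat 1 1)))
    (TT_add (TT_add (TT_add (TT_smul _ (TT_mul (TTq_d10 ε) (TTq_a01 ε)))
        (TT_smul _ (TT_mul (TTq_d00 ε) (TTq_a11 ε))))
        (TT_smul _ (TT_mul (TTq_d11 ε) (TTq_a11 ε))))
      (TT_smul _ (TT_mul (TTq_d11 ε) (TTq_a00 ε))))
    (TT_smul _ (TT_mul (TTq_a11 ε) (TTq_d11 ε)))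
    E

theorem Dq_all (b : DqM2 ε) : b ∈ TT (πD (DAmat 1 0)) := by
  obtain ⟨x, rfl⟩ := RingQuot.mkAlgHom_surjective K (DqRel ε) b
  induction x using FreeAlgebra.induction with
  | grade0 r => ?_
  | grade1 g => ?_
  | mul a b ha hb => ?_
  | add a b ha hb => ?_
  · rw [AlgHom.commutes]
    exact TT_algebraMap _ r
  · obtain (⟨i, j⟩ | ⟨i, j⟩) := g <;> fin_cases i <;> fin_cases j
    · exact TTq_a00 ε
    · exact TTq_a01 ε
    · exact TT_self _
    · exact TTq_a11 ε
    · exact TTq_d00 ε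
    · exact TTq_d01 ε
    · exact TTq_d10 ε
    · exact TTq_d11 ε
  · rw [_root_.map_mul]
    exact TT_mul ha hb
  · rw [_root_.map_add]
    exact TT_add ha hb

theorem Dq_ore :
    LeftOreCond ((Submonoid.powers (da ε 1 0) : Submonoid (DqM2 ε)) : Set (DqM2 ε)) := by
  intro s' hs' b
  rw [SetLike.mem_coe, Submonoid.mem_powers_iff] at hs'
  obtain ⟨m, hm⟩ := hs'
  obtain ⟨n, b', h⟩ := Dq_all ε b m
  refine ⟨(da ε 1 0) ^ n, ?_, b', ?_⟩
  · rw [SetLike.mem_coe, Submonoid.mem_powers_iff]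
    exact ⟨n, rfl⟩
  · rw [← hm]
    exact h

end DqSide

section DpSide

variable (ε : ℕ)

local notation "πP" => RingQuot.mkAlgHom K (DpRel ε)

theorem Dp_cross (p q : Fin 2 × Fin 2) :
    πP ((PF2 * PA1) p q)
      = (qq⁻¹ ^ ε) • πP ((liftP Rmat21 * PA1 * liftP Rmat * PF2) p q) := by
  have := RingQuot.mkAlgHom_rel K (DpRel.cross (ε := ε) p q)
  rwa [_root_.map_smul] at this

theorem fidDpR1 : (liftP Rmat21 * PA1 * liftP Rmat * PF2)
    ((1 : Fin 2), (1 : Fin 2)) ((0 : Fin 2), (0 : Fin 2))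
    = qq • (PAmat 1 0 * PFmat 1 0) := gDpR1 qq qq_ne PAmat PFmat

theorem fidDpR2 : (liftP Rmat21 * PA1 * liftP Rmat * PF2)
    ((1 : Fin 2), (1 : Fin 2)) ((0 : Fin 2), (1 : Fin 2))
    = qq • (PAmat 1 0 * PFmat 1 1) := gDpR2 qq qq_ne PAmat PFmat

theorem fidDpR3 : (liftP Rmat21 * PA1 * liftP Rmat * PF2)
    ((1 : Fin 2), (0 : Fin 2)) ((0 : Fin 2), (0 : Fin 2))
    = qq • (PAmat 1 0 * PFmat 0 0) + (qq - qq⁻¹) • (PAmat 1 1 * PFmat 1 0) :=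
  gDpR3 qq qq_ne PAmat PFmat

theorem fidDpR4 : (liftP Rmat21 * PA1 * liftP Rmat * PF2)
    ((1 : Fin 2), (0 : Fin 2)) ((0 : Fin 2), (1 : Fin 2))
    = qq • (PAmat 1 0 * PFmat 0 1) + (qq - qq⁻¹) • (PAmat 1 1 * PFmat 1 1) :=
  gDpR4 qq qq_ne PAmat PFmat

theorem fidDpL1 : (PF2 * PA1) ((1 : Fin 2), (1 : Fin 2)) ((0 : Fin 2), (0 : Fin 2))
    = PFmat 1 0 * PAmat 1 0 := gDpL1 qq qq_ne PAmat PFmat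

theorem fidDpL2 : (PF2 * PA1) ((1 : Fin 2), (1 : Fin 2)) ((0 : Fin 2), (1 : Fin 2))
    = PFmat 1 1 * PAmat 1 0 := gDpL2 qq qq_ne PAmat PFmat

theorem fidDpL3 : (PF2 * PA1) ((1 : Fin 2), (0 : Fin 2)) ((0 : Fin 2), (0 : Fin 2))
    = PFmat 0 0 * PAmat 1 0 := gDpL3 qq qq_ne PAmat PFmat

theorem fidDpL4 : (PF2 * PA1) ((1 : Fin 2), (0 : Fin 2)) ((0 : Fin 2), (1 : Fin 2))
    = PFmat 0 1 * PAmat 1 0 := gDpL4 qq qq_ne PAmat PFmat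

theorem TTp_a11 : πP (PAmat 1 1) ∈ TT (πP (PAmat 1 0)) := by
  have E := RingQuot.mkAlgHom_rel K (DpRel.ra (ε := ε) (ReRel.r6 (A := PAmat)))
  simp only [_root_.map_mul, _root_.map_smul] at E
  exact TT_keyv ((qq ^ 2)⁻¹) 1 (inv_ne_zero (pow_ne_zero 2 qq_ne)) 0 0 (TT_zero _) (TT_zero _)
    (by rw [one_smul, add_zero, add_zero]; exact E)

theorem TTp_a00 : πP (PAmat 0 0) ∈ TT (πP (PAmat 1 0)) := by
  have E := RingQuot.mkAlgHom_rel K (DpRel.ra (ε := ε) (ReRel.r3 (A := PAmat)))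
  simp only [_root_.map_sub, _root_.map_mul, _root_.map_smul] at E
  refine TT_key 1 (((qq ^ 2)⁻¹ - 1) • (πP (PAmat 1 1) * πP (PAmat 1 0)))
    (TT_smul _ (TT_mul (TTp_a11 ε) (TT_self _))) ?_
  rw [one_smul, ← E]
  abel

theorem TTp_a01 : πP (PAmat 0 1) ∈ TT (πP (PAmat 1 0)) := by
  have E := RingQuot.mkAlgHom_rel K (DpRel.ra (ε := ε) (ReRel.r5 (A := PAmat)))
  simp only [_root_.map_sub, _root_.map_mul, _root_.map_smul] at E
  refine TT_key 1 ((-((qq ^ 2)⁻¹ - 1)) • (πP (PAmat 0 0) * πP (PAmat 1 1)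
      - πP (PAmat 1 1) * πP (PAmat 1 1)))
    (TT_smul _ (TT_sub (TT_mul (TTp_a00 ε) (TTp_a11 ε)) (TT_mul (TTp_a11 ε) (TTp_a11 ε)))) ?_
  rw [one_smul, ← E]
  abel

theorem TTp_f10 : πP (PFmat 1 0) ∈ TT (πP (PAmat 1 0)) := by
  have E := Dp_cross ε ((1 : Fin 2), (1 : Fin 2)) ((0 : Fin 2), (0 : Fin 2))
  rw [fidDpL1, fidDpR1] at E
  simp only [_root_.map_smul, _root_.map_mul, smul_smul] at E
  exact TT_keyv (qq⁻¹ ^ ε * qq) 1 (mul_ne_zero (pow_ne_zero _ (inv_ne_zero qq_ne)) qq_ne) 0 0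
    (TT_zero _) (TT_zero _) (by rw [one_smul, add_zero, add_zero]; exact E)

theorem TTp_f11 : πP (PFmat 1 1) ∈ TT (πP (PAmat 1 0)) := by
  have E := Dp_cross ε ((1 : Fin 2), (1 : Fin 2)) ((0 : Fin 2), (1 : Fin 2))
  rw [fidDpL2, fidDpR2] at E
  simp only [_root_.map_smul, _root_.map_mul, smul_smul] at E
  exact TT_keyv (qq⁻¹ ^ ε * qq) 1 (mul_ne_zero (pow_ne_zero _ (inv_ne_zero qq_ne)) qq_ne) 0 0
    (TT_zero _) (TT_zero _) (by rw [one_smul, add_zero, add_zero]; exact E)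

theorem TTp_f00 : πP (PFmat 0 0) ∈ TT (πP (PAmat 1 0)) := by
  have E := Dp_cross ε ((1 : Fin 2), (0 : Fin 2)) ((0 : Fin 2), (0 : Fin 2))
  rw [fidDpL3, fidDpR3] at E
  simp only [_root_.map_add, _root_.map_smul, _root_.map_mul, smul_add, smul_smul] at E
  exact TT_keyv (qq⁻¹ ^ ε * qq) 1 (mul_ne_zero (pow_ne_zero _ (inv_ne_zero qq_ne)) qq_ne) 0
    ((qq⁻¹ ^ ε * (qq - qq⁻¹)) • (πP (PAmat 1 1) * πP (PFmat 1 0)))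
    (TT_zero _) (TT_smul _ (TT_mul (TTp_a11 ε) (TTp_f10 ε)))
    (by rw [one_smul, add_zero]; exact E)

theorem TTp_f01 : πP (PFmat 0 1) ∈ TT (πP (PAmat 1 0)) := by
  have E := Dp_cross ε ((1 : Fin 2), (0 : Fin 2)) ((0 : Fin 2), (1 : Fin 2))
  rw [fidDpL4, fidDpR4] at E
  simp only [_root_.map_add, _root_.map_smul, _root_.map_mul, smul_add, smul_smul] at E
  exact TT_keyv (qq⁻¹ ^ ε * qq) 1 (mul_ne_zero (pow_ne_zero _ (inv_ne_zero qq_ne)) qq_ne) 0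
    ((qq⁻¹ ^ ε * (qq - qq⁻¹)) • (πP (PAmat 1 1) * πP (PFmat 1 1)))
    (TT_zero _) (TT_smul _ (TT_mul (TTp_a11 ε) (TTp_f11 ε)))
    (by rw [one_smul, add_zero]; exact E)

theorem Dp_all (b : DpM2 ε) : b ∈ TT (πP (PAmat 1 0)) := by
  obtain ⟨x, rfl⟩ := RingQuot.mkAlgHom_surjective K (DpRel ε) b
  induction x using FreeAlgebra.induction with
  | grade0 r => ?_
  | grade1 g => ?_
  | mul a b ha hb => ?_
  | add a b ha hb => ?_
  · rw [AlgHom.commutes]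
    exact TT_algebraMap _ r
  · obtain (⟨i, j⟩ | ⟨i, j⟩) := g <;> fin_cases i <;> fin_cases j
    · exact TTp_a00 ε
    · exact TTp_a01 ε
    · exact TT_self _
    · exact TTp_a11 ε
    · exact TTp_f00 ε
    · exact TTp_f01 ε
    · exact TTp_f10 ε
    · exact TTp_f11 ε
  · rw [_root_.map_mul]
    exact TT_mul ha hb
  · rw [_root_.map_add]
    exact TT_add ha hb

theorem Dp_ore :
    LeftOreCond ((Submonoid.powers (pa ε 1 0) : Submonoid (DpM2 ε)) : Set (DpM2 ε)) := by
  intro s' hs' b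
  rw [SetLike.mem_coe, Submonoid.mem_powers_iff] at hs'
  obtain ⟨m, hm⟩ := hs'
  obtain ⟨n, b', h⟩ := Dp_all ε b m
  refine ⟨(pa ε 1 0) ^ n, ?_, b', ?_⟩
  · rw [SetLike.mem_coe, Submonoid.mem_powers_iff]
    exact ⟨n, rfl⟩
  · rw [← hm]
    exact h

end DpSide


/-- For `ε ∈ {0,1}`, the multiplicative submonoid `{ a₂₁ⁿ : n ∈ ℕ }` satisfies the left
Ore condition both in `D_q(Mat_2^ε)` and in `D'_q(Mat_2^ε)`. -/
theorem a21_powers_ore :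
    ∀ ε : ℕ, ε = 0 ∨ ε = 1 →
      LeftOreCond ((Submonoid.powers (da ε 1 0) : Submonoid (DqM2 ε)) : Set (DqM2 ε)) ∧
      LeftOreCond ((Submonoid.powers (pa ε 1 0) : Submonoid (DpM2 ε)) : Set (DpM2 ε)) := by
  intro ε _
  exact ⟨Dq_ore ε, Dp_ore ε⟩
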